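/- Extension property of the zero-predimension class: let C = { A ∈ K₀ : δ(A) = 0 }. For every finite graph A ∈ C and every finite family e₀, …, e_n of graph isomorphisms between self-sufficient induced subgraphs of A, there exist a finite graph B ∈ C containing A as an induced subgraph and automorphisms f₀, …, f_n of B such that f_i extends e_i for each 0 ≤ i ≤ n. -/

import Mathlib

open scoped Cardinal

/-- Number of edges of the graph `G` with both endpoints in `A`
(ordered pairs counted and divided by two). -/
noncomputable def edgeCount {V : Type*} (G : SimpleGraph V) (A : Set V) : ℕ :=
  {p : V × V | p.1 ∈ A ∧ p.2 ∈ A ∧ G.Adj p.1 p.2}.ncard / 2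

/-- The pre-dimension `δ(A) = m·|A| − e(A)`. -/
noncomputable def delta {V : Type*} (m : ℕ) (G : SimpleGraph V) (A : Set V) : ℤ :=
  (m : ℤ) * A.ncard - edgeCount G A

/-- `A` is self-sufficient (`≤`-closed) in `B`:  `A ⊆ B` and `δ(A') ≥ δ(A)` for
every finite `A'` with `A ⊆ A' ⊆ B`. -/
def SelfSuff {V : Type*} (m : ℕ) (G : SimpleGraph V) (A B : Set V) : Prop :=
  A ⊆ B ∧ ∀ A' : Set V, A'.Finite → A ⊆ A' → A' ⊆ B → delta m G A ≤ delta m G A'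

/-- A graph belongs to the class `K₀` if `δ(A') ≥ 0` for every set `A'` of its
vertices (used for finite graphs). -/
def InK0 {V : Type*} (m : ℕ) (G : SimpleGraph V) : Prop :=
  ∀ A : Set V, 0 ≤ delta m G A

/-- `G` is a `(K₀,≤)`-generic graph: (i) it is the union of an increasing chain of
finite self-sufficient subsets; (ii) every isomorphism between finite self-sufficient
induced subgraphs extends to an automorphism; (iii) every finite graph in `K₀` is
isomorphic to the induced subgraph on some finite self-sufficient subset. -/
def IsGeneric (m : ℕ) {V : Type} (G : SimpleGraph V) : Prop :=
  (∃ F : ℕ → Set V, (∀ n, (F n).Finite) ∧ (∀ n, F n ⊆ F (n + 1)) ∧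
      (∀ n, SelfSuff m G (F n) Set.univ) ∧ (⋃ n, F n) = Set.univ) ∧
  (∀ A B : Set V, A.Finite → B.Finite → SelfSuff m G A Set.univ → SelfSuff m G B Set.univ →
      ∀ e : G.induce A ≃g G.induce B, ∃ g : G ≃g G, ∀ a : A, g a = (e a : V)) ∧
  (∀ (W : Type) (_ : Fintype W) (H : SimpleGraph W), InK0 m H →
      ∃ s : Set V, s.Finite ∧ SelfSuff m G s Set.univ ∧ Nonempty (H ≃g G.induce s))

/-- The self-sufficient closure `cl(A)`: the intersection of all finite
self-sufficient subsets of the ambient graph containing `A` (which is the smallest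
such set whenever a smallest one exists). -/
def scl {V : Type*} (m : ℕ) (G : SimpleGraph V) (A : Set V) : Set V :=
  ⋂₀ {B : Set V | A ⊆ B ∧ B.Finite ∧ SelfSuff m G B Set.univ}

/-- The dimension `d(A) = δ(cl(A))`. -/
noncomputable def gdim {V : Type*} (m : ℕ) (G : SimpleGraph V) (A : Set V) : ℤ :=
  delta m G (scl m G A)

/-- The geometric closure
`gcl(X) = { v : d(A ∪ {v}) = d(A) for some finite A ⊆ X }`. -/
def gcl {V : Type*} (m : ℕ) (G : SimpleGraph V) (X : Set V) : Set V :=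
  {v | ∃ A : Set V, A ⊆ X ∧ A.Finite ∧ gdim m G (A ∪ {v}) = gdim m G A}

/-- The pointwise stabilizer `Aut_A(M)` of a set `A` of vertices, as a subgroup of
the automorphism group. -/
def pointStab {V : Type*} (G : SimpleGraph V) (A : Set V) : Subgroup (G ≃g G) where
  carrier := {g | ∀ a ∈ A, g a = a}
  one_mem' := fun a _ => rfl
  mul_mem' := by
    intro g h hg hh a ha
    show g (h a) = a
    rw [hh a ha, hg a ha]
  inv_mem' := by
    intro g hg a ha
    show g⁻¹ a = a
    conv_lhs => rw [← hg a ha]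
    simp

/-- The setwise stabilizer `Aut_{{X}}(M) = { g : g[X] = X }` of a set `X` of
vertices, as a subgroup of the automorphism group. -/
def setStab {V : Type*} (G : SimpleGraph V) (X : Set V) : Subgroup (G ≃g G) where
  carrier := {g | (fun v => g v) '' X = X}
  one_mem' := by simp
  mul_mem' := by
    intro g h hg hh
    show (fun v => g (h v)) '' X = X
    rw [show (fun v => g (h v)) = (fun v => g v) ∘ (fun v => h v) from rfl,
      Set.image_comp, hh, hg]
  inv_mem' := by
    intro g hg
    show (fun v => g⁻¹ v) '' X = X
    conv_lhs => rw [← hg]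
    rw [← Set.image_comp]
    have : (fun v => g⁻¹ v) ∘ (fun v => g v) = id := by
      funext v
      show g⁻¹ (g v) = v
      simp
    rw [this, Set.image_id]

/-- The topology of pointwise convergence on the automorphism group of a graph
(the vertex set being discrete). -/
def autTop (V : Type*) (G : SimpleGraph V) : TopologicalSpace (G ≃g G) :=
  TopologicalSpace.induced (fun g => (g : V → V))
    (@Pi.topologicalSpace V (fun _ => V) (fun _ => ⊥))



/-!
Glue together one copy of `G` for every permutation `γ` of the vertices: after extending each
`e i` to a permutation `g i`, the vertex `d ∈ D i` of copy `γ * g i` is identified with the vertex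
`g i d` of copy `γ`. Left multiplication of the copy indices by `g i` is then an automorphism
extending `e i` on copy `1`.

Since `δ` is submodular and `G ∈ K₀`, the sets of predimension zero are closed under union and
intersection, and there is no edge between `A \ B` and `B \ A` for zero sets `A`, `B`. Following
the generated equivalence relation step by step, two copies overlap in a zero set on which the
identification is a partial isomorphism of `G`. So every copy is an induced copy of `G`, and
adding the copies one at a time is a free amalgam over a zero set, which stays in `K₀` with
`δ = 0`.
-/

open Set

section Counting

variable {V : Type*} (m : ℕ) (G : SimpleGraph V)

def adjPairs (A : Set V) : Set (V × V) := {p | p.1 ∈ A ∧ p.2 ∈ A ∧ G.Adj p.1 p.2}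

lemma adjPairs_mono {A B : Set V} (h : A ⊆ B) : adjPairs G A ⊆ adjPairs G B :=
  fun _ hp => ⟨h hp.1, h hp.2.1, hp.2.2⟩

lemma adjPairs_inter (A B : Set V) : adjPairs G (A ∩ B) = adjPairs G A ∩ adjPairs G B := by
  ext p
  simp only [adjPairs, mem_inter_iff, mem_ofPred_eq]
  tauto

lemma delta_empty : delta m G ∅ = 0 := by
  simp [delta, edgeCount]

variable [Finite V]

lemma even_ncard_adjPairs (A : Set V) : Even (adjPairs G A).ncard := by
  classical
  let K : SimpleGraph V := ((⊤ : G.Subgraph).induce A).spanningCoe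
  have : Fintype V := Fintype.ofFinite V
  have e : K.Dart ≃ adjPairs G A :=
    { toFun := fun d => ⟨d.toProd, by simpa [K, adjPairs] using d.adj⟩
      invFun := fun p => ⟨p.1, by simpa [K, adjPairs] using p.2⟩
      left_inv := fun _ => rfl
      right_inv := fun _ => rfl }
  rw [← Nat.card_coe_set_eq, ← Nat.card_congr e, Nat.card_eq_fintype_card,
    K.dart_card_eq_twice_card_edges]
  exact even_two_mul _

lemma two_mul_delta (A : Set V) :
    2 * delta m G A = 2 * m * A.ncard - (adjPairs G A).ncard := by
  obtain ⟨k, hk⟩ := even_ncard_adjPairs G A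
  have : edgeCount G A = k := by rw [edgeCount, ← adjPairs, hk]; omega
  simp only [delta, this, hk]
  push_cast
  ring

/-- The defect of submodularity of `δ` counts the (ordered) edges between `A \ B` and `B \ A`. -/
lemma two_mul_delta_union_add_inter (A B : Set V) :
    2 * (delta m G (A ∪ B) + delta m G (A ∩ B))
      + (adjPairs G (A ∪ B) \ (adjPairs G A ∪ adjPairs G B)).ncard
      = 2 * (delta m G A + delta m G B) := by
  have hV := ncard_union_add_ncard_inter A B
  have hE := ncard_union_add_ncard_inter (adjPairs G A) (adjPairs G B)
  have hD := ncard_sdiff_add_ncard_of_subset (union_subset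
    (adjPairs_mono G (subset_union_left (t := B))) (adjPairs_mono G (subset_union_right (s := A))))
  rw [← adjPairs_inter] at hE
  zify at hV hE hD
  linear_combination two_mul_delta m G (A ∪ B) + two_mul_delta m G (A ∩ B)
    - two_mul_delta m G A - two_mul_delta m G B + 2 * (m : ℤ) * hV - hE + hD

lemma delta_union_add_inter_le (A B : Set V) :
    delta m G (A ∪ B) + delta m G (A ∩ B) ≤ delta m G A + delta m G B := by
  linarith [two_mul_delta_union_add_inter m G A B]

lemma delta_union_add_inter_lt {A B : Set V} {u u' : V} (hu : u ∈ A \ B) (hu' : u' ∈ B \ A)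
    (huu' : G.Adj u u') :
    delta m G (A ∪ B) + delta m G (A ∩ B) < delta m G A + delta m G B := by
  have hcross : (u, u') ∈ adjPairs G (A ∪ B) \ (adjPairs G A ∪ adjPairs G B) :=
    ⟨⟨.inl hu.1, .inr hu'.1, huu'⟩, by rintro (⟨-, h, -⟩ | ⟨h, -⟩) <;> simp_all⟩
  have := (ncard_pos (toFinite _)).2 ⟨_, hcross⟩
  linarith [two_mul_delta_union_add_inter m G A B]

lemma delta_union_add_inter_eq {A B : Set V}
    (hAB : ∀ u ∈ A \ B, ∀ u' ∈ B \ A, ¬ G.Adj u u') :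
    delta m G (A ∪ B) + delta m G (A ∩ B) = delta m G A + delta m G B := by
  have hempty : adjPairs G (A ∪ B) \ (adjPairs G A ∪ adjPairs G B) = ∅ := by
    refine sdiff_eq_empty.2 fun ⟨u, u'⟩ ⟨hu, hu', huu'⟩ => ?_
    have h := hAB u
    have h' := hAB u'
    have hu'u := huu'.symm
    simp only [mem_sdiff] at h h'
    simp only [adjPairs, mem_union, mem_ofPred_eq] at hu hu' ⊢
    tauto
  have := two_mul_delta_union_add_inter m G A B
  rw [hempty, ncard_empty, Nat.cast_zero] at this
  linarith

lemma delta_image {W : Type*} [Finite W] (H : SimpleGraph W) {θ : V → W} {S : Set V}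
    (hθ : InjOn θ S) (hadj : ∀ u ∈ S, ∀ u' ∈ S, (H.Adj (θ u) (θ u') ↔ G.Adj u u')) :
    delta m H (θ '' S) = delta m G S := by
  have hpairs : adjPairs H (θ '' S) = Prod.map θ θ '' adjPairs G S := by
    ext ⟨x, y⟩
    constructor
    · rintro ⟨⟨u, hu, rfl⟩, ⟨u', hu', rfl⟩, h⟩
      exact ⟨(u, u'), ⟨hu, hu', (hadj u hu u' hu').1 h⟩, rfl⟩
    · rintro ⟨⟨u, u'⟩, ⟨hu, hu', h⟩, hxy⟩
      cases hxy
      exact ⟨mem_image_of_mem θ hu, mem_image_of_mem θ hu', (hadj u hu u' hu').2 h⟩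
  have hinj : InjOn (Prod.map θ θ) (adjPairs G S) := fun p hp q hq h =>
    Prod.ext (hθ hp.1 hq.1 (congrArg Prod.fst h)) (hθ hp.2.1 hq.2.1 (congrArg Prod.snd h))
  have h2 := two_mul_delta m H (θ '' S)
  rw [hpairs, hinj.ncard_image, hθ.ncard_image, ← two_mul_delta] at h2
  linarith

end Counting

section ZeroSets

variable {V : Type*} [Finite V] {m : ℕ} {G : SimpleGraph V}

lemma delta_union_eq_zero (hK : InK0 m G) {A B : Set V} (hA : delta m G A = 0)
    (hB : delta m G B = 0) : delta m G (A ∪ B) = 0 := by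
  linarith [delta_union_add_inter_le m G A B, hK (A ∪ B), hK (A ∩ B)]

lemma delta_inter_eq_zero (hK : InK0 m G) {A B : Set V} (hA : delta m G A = 0)
    (hB : delta m G B = 0) : delta m G (A ∩ B) = 0 := by
  linarith [delta_union_add_inter_le m G A B, hK (A ∪ B), hK (A ∩ B)]

lemma delta_biUnion_eq_zero (hK : InK0 m G) {ι : Type*} {s : Finset ι} {Z : ι → Set V}
    (hZ : ∀ i ∈ s, delta m G (Z i) = 0) : delta m G (⋃ i ∈ s, Z i) = 0 := by
  rw [← Finset.sup_set_eq_biUnion]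
  exact Finset.sup_induction (p := fun A => delta m G A = 0) (delta_empty m G)
    (fun _ hA _ hB => delta_union_eq_zero hK hA hB) hZ

lemma delta_inter_le_of_delta_eq_zero (hK : InK0 m G) {Z : Set V} (hZ : delta m G Z = 0)
    (X : Set V) : delta m G (X ∩ Z) ≤ delta m G X := by
  linarith [delta_union_add_inter_le m G X Z, hK (X ∪ Z)]

lemma not_adj_of_delta_eq_zero (hK : InK0 m G) {A B : Set V} (hA : delta m G A = 0)
    (hB : delta m G B = 0) {u u' : V} (hu : u ∈ A \ B) (hu' : u' ∈ B \ A) : ¬ G.Adj u u' :=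
  fun h => by linarith [delta_union_add_inter_lt m G hu hu' h, hK (A ∪ B), hK (A ∩ B)]

lemma delta_eq_zero_of_selfSuff (hK : InK0 m G) (h0 : delta m G univ = 0) {A : Set V}
    (hA : SelfSuff m G A univ) : delta m G A = 0 := by
  linarith [hA.2 univ (toFinite _) hA.1 subset_rfl, hK A]

lemma delta_nonneg_of_subset_union {P Q : Set V}
    (hPQ : ∀ u ∈ P \ Q, ∀ u' ∈ Q \ P, ¬ G.Adj u u') (hP : ∀ X ⊆ P, 0 ≤ delta m G X)
    (hQ : ∀ X ⊆ Q, delta m G (X ∩ P) ≤ delta m G X) {X : Set V} (hX : X ⊆ P ∪ Q) :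
    0 ≤ delta m G X := by
  have hsplit := delta_union_add_inter_eq m G (A := X ∩ P) (B := X ∩ Q) fun u hu u' hu' =>
    hPQ u ⟨hu.1.2, fun h => hu.2 ⟨hu.1.1, h⟩⟩ u' ⟨hu'.1.2, fun h => hu'.2 ⟨hu'.1.1, h⟩⟩
  rw [← inter_union_distrib_left, inter_eq_self_of_subset_left hX,
    inter_inter_inter_comm, inter_self, inter_comm P, ← inter_assoc] at hsplit
  linarith [hQ (X ∩ Q) inter_subset_right, hP (X ∩ P) inter_subset_right]

end ZeroSets

section PartialIso

variable {V : Type*} {m : ℕ} {G : SimpleGraph V}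

def IsZeroIsoOn (m : ℕ) (G : SimpleGraph V) (σ : Equiv.Perm V) (Z : Set V) : Prop :=
  delta m G Z = 0 ∧ ∀ u ∈ Z, ∀ u' ∈ Z, (G.Adj (σ u) (σ u') ↔ G.Adj u u')

namespace IsZeroIsoOn

lemma one_univ (h0 : delta m G univ = 0) : IsZeroIsoOn m G 1 univ :=
  ⟨h0, fun _ _ _ _ => Iff.rfl⟩

variable [Finite V] {σ τ : Equiv.Perm V} {Z W : Set V}

lemma delta_image (h : IsZeroIsoOn m G σ Z) : delta m G (σ '' Z) = 0 :=
  (_root_.delta_image m G G σ.injective.injOn h.2).trans h.1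

lemma inv_image (h : IsZeroIsoOn m G σ Z) : IsZeroIsoOn m G σ⁻¹ (σ '' Z) := by
  refine ⟨h.delta_image, ?_⟩
  rintro _ ⟨u, hu, rfl⟩ _ ⟨u', hu', rfl⟩
  simpa using (h.2 u hu u' hu').symm

lemma mul (hK : InK0 m G) (hσ : IsZeroIsoOn m G σ Z) (hτ : IsZeroIsoOn m G τ W) :
    IsZeroIsoOn m G (τ * σ) (Z ∩ σ ⁻¹' W) := by
  have hadj : ∀ u ∈ Z ∩ σ ⁻¹' W, ∀ u' ∈ Z ∩ σ ⁻¹' W,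
      (G.Adj ((τ * σ) u) ((τ * σ) u') ↔ G.Adj u u') := fun u hu u' hu' =>
    (hτ.2 _ hu.2 _ hu'.2).trans (hσ.2 u hu.1 u' hu'.1)
  refine ⟨?_, hadj⟩
  rw [← _root_.delta_image m G G σ.injective.injOn (fun u hu u' hu' => hσ.2 u hu.1 u' hu'.1),
    image_inter_preimage]
  exact delta_inter_eq_zero hK hσ.delta_image hτ.1

/-- Edges between `Z \ W` and `W \ Z` are excluded in `G` on both sides of `σ`, since `Z`, `W`,
`σ '' Z`, `σ '' W` all have predimension zero. -/
lemma union (hK : InK0 m G) (hZ : IsZeroIsoOn m G σ Z) (hW : IsZeroIsoOn m G σ W) :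
    IsZeroIsoOn m G σ (Z ∪ W) := by
  have key : ∀ u ∈ Z, ∀ u' ∈ W, (G.Adj (σ u) (σ u') ↔ G.Adj u u') := by
    intro u hu u' hu'
    by_cases huW : u ∈ W
    · exact hW.2 u huW u' hu'
    by_cases hu'Z : u' ∈ Z
    · exact hZ.2 u hu u' hu'Z
    have hσu : σ u ∈ σ '' Z \ σ '' W := ⟨mem_image_of_mem σ hu, by simpa using huW⟩
    have hσu' : σ u' ∈ σ '' W \ σ '' Z := ⟨mem_image_of_mem σ hu', by simpa using hu'Z⟩
    exact iff_of_false (not_adj_of_delta_eq_zero hK hZ.delta_image hW.delta_image hσu hσu')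
      (not_adj_of_delta_eq_zero hK hZ.1 hW.1 ⟨hu, huW⟩ ⟨hu', hu'Z⟩)
  refine ⟨delta_union_eq_zero hK hZ.1 hW.1, ?_⟩
  rintro u (hu | hu) u' (hu' | hu')
  · exact hZ.2 u hu u' hu'
  · exact key u hu u' hu'
  · rw [G.adj_comm, G.adj_comm u]
    exact key u' hu' u hu
  · exact hW.2 u hu u' hu'

lemma of_forall_mem (hK : InK0 m G) {U : Set V}
    (h : ∀ v ∈ U, ∃ Z ⊆ U, v ∈ Z ∧ IsZeroIsoOn m G σ Z) : IsZeroIsoOn m G σ U := by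
  classical
  choose! Z hZU hvZ hZ using h
  have hU : U = U.toFinite.toFinset.sup Z :=
    le_antisymm (fun v hv => Finset.le_sup (f := Z) (by simpa using hv) (hvZ v hv))
      (Finset.sup_le fun v hv => hZU v (by simpa using hv))
  rw [hU]
  exact Finset.sup_induction (p := IsZeroIsoOn m G σ) ⟨delta_empty m G, by simp⟩
    (fun _ hA _ hB => hA.union hK hB) fun v hv => hZ v (by simpa using hv)

end IsZeroIsoOn

end PartialIso

namespace Gluing

open Equiv

variable {V ι : Type*} (D : ι → Set V) (g : ι → Perm V)

/-- The pair `(v, γ)` stands for the vertex `v` of copy `γ` of `G`; the vertex `d ∈ D i` of copy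
`γ * g i` is glued to the vertex `g i d` of copy `γ`. -/
def Glue (x y : V × Perm V) : Prop :=
  ∃ i, x.1 ∈ D i ∧ y.1 = g i x.1 ∧ x.2 = y.2 * g i

abbrev Vert : Type _ := Quot (Glue D g)

def project : Vert D g → V :=
  Quot.lift (fun x => x.2 x.1) <| by
    rintro x y ⟨i, -, hy, hx⟩
    simp [hx, hy]

def copy (γ : Perm V) : V ↪ Vert D g where
  toFun v := Quot.mk _ (v, γ)
  inj' _ _ h := γ.injective (congrArg (project D g) h)

variable {D g}

lemma project_copy (γ : Perm V) (v : V) : project D g (copy D g γ v) = γ v := rfl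

lemma copy_mul_apply {i : ι} {d : V} (hd : d ∈ D i) (γ : Perm V) :
    copy D g (γ * g i) d = copy D g γ (g i d) :=
  Quot.sound ⟨i, hd, rfl, rfl⟩

lemma eq_of_copy_eq_copy {ε γ : Perm V} {v u : V} (h : copy D g ε v = copy D g γ u) :
    u = (γ⁻¹ * ε) v := by
  have := congrArg (project D g) h
  simp only [project_copy] at this
  simp [this]

lemma eq_of_eqvGen {x y : V × Perm V} (h : Relation.EqvGen (Glue D g) x y) :
    y.1 = (y.2⁻¹ * x.2) x.1 :=
  eq_of_copy_eq_copy (Quot.eqvGen_sound h)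

variable (D g)

def overlap (ε γ : Perm V) : Set V := copy D g ε ⁻¹' range (copy D g γ)

variable {D g}

lemma mem_overlap_iff {ε γ : Perm V} {v : V} :
    v ∈ overlap D g ε γ ↔ copy D g ε v = copy D g γ ((γ⁻¹ * ε) v) := by
  refine ⟨fun ⟨u, hu⟩ => ?_, fun h => ⟨_, h.symm⟩⟩
  rw [← eq_of_copy_eq_copy hu.symm, hu]

section Overlap

variable [Finite V] {m : ℕ} {G : SimpleGraph V} (hK : InK0 m G) (h0 : delta m G univ = 0)
  (hg : ∀ i, IsZeroIsoOn m G (g i) (D i))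
include hK h0 hg

lemma exists_isZeroIsoOn_of_eqvGen {x y : V × Perm V} (h : Relation.EqvGen (Glue D g) x y) :
    ∃ Z ⊆ overlap D g x.2 y.2, x.1 ∈ Z ∧ IsZeroIsoOn m G (y.2⁻¹ * x.2) Z := by
  induction h with
  | rel x y hxy =>
    obtain ⟨i, hx, -, hx2⟩ := hxy
    refine ⟨D i, fun d hd => ⟨g i d, ?_⟩, hx, ?_⟩
    · rw [hx2, copy_mul_apply hd]
    · simpa [hx2] using hg i
  | refl x => exact ⟨univ, fun v _ => ⟨v, rfl⟩, trivial, by simpa using IsZeroIsoOn.one_univ h0⟩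
  | symm x y hxy ih =>
    obtain ⟨Z, hZ, hx, hσ⟩ := ih
    refine ⟨(y.2⁻¹ * x.2) '' Z, ?_, ?_, by simpa using hσ.inv_image⟩
    · rintro _ ⟨u, hu, rfl⟩
      exact ⟨u, mem_overlap_iff.1 (hZ hu)⟩
    · exact ⟨x.1, hx, (eq_of_eqvGen hxy).symm⟩
  | trans x y z hxy hyz ih₁ ih₂ =>
    obtain ⟨Z₁, hZ₁, hx, hσ₁⟩ := ih₁
    obtain ⟨Z₂, hZ₂, hy, hσ₂⟩ := ih₂
    refine ⟨Z₁ ∩ (y.2⁻¹ * x.2) ⁻¹' Z₂, ?_, ⟨hx, ?_⟩, ?_⟩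
    · rintro u ⟨hu₁, hu₂⟩
      refine ⟨(z.2⁻¹ * y.2) ((y.2⁻¹ * x.2) u), ?_⟩
      rw [mem_overlap_iff.1 (hZ₁ hu₁), mem_overlap_iff.1 (hZ₂ hu₂)]
    · rwa [mem_preimage, ← eq_of_eqvGen hxy]
    · simpa [mul_assoc] using hσ₁.mul hK hσ₂

lemma isZeroIsoOn_overlap (ε γ : Perm V) : IsZeroIsoOn m G (γ⁻¹ * ε) (overlap D g ε γ) := by
  refine IsZeroIsoOn.of_forall_mem hK fun v ⟨u, hu⟩ => ?_
  exact exists_isZeroIsoOn_of_eqvGen hK h0 hg (Quot.eqvGen_exact hu.symm)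

end Overlap

variable (D g) in
def graph (G : SimpleGraph V) : SimpleGraph (Vert D g) := ⨆ γ, G.map (copy D g γ)

section Graph

variable [Finite V] {m : ℕ} {G : SimpleGraph V} (hK : InK0 m G) (h0 : delta m G univ = 0)
  (hg : ∀ i, IsZeroIsoOn m G (g i) (D i))
include hK h0 hg

lemma copy_adj_copy_iff {γ : Perm V} {u u' : V} :
    (graph D g G).Adj (copy D g γ u) (copy D g γ u') ↔ G.Adj u u' := by
  simp only [graph, SimpleGraph.iSup_adj, SimpleGraph.map_adj]
  refine ⟨fun ⟨ε, w, w', h, hw, hw'⟩ => ?_, fun h => ⟨γ, u, u', h, rfl, rfl⟩⟩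
  rw [eq_of_copy_eq_copy hw, eq_of_copy_eq_copy hw']
  exact ((isZeroIsoOn_overlap hK h0 hg ε γ).2 w ⟨u, hw.symm⟩ w' ⟨u', hw'.symm⟩).2 h

variable (D g) in
def copyEmbedding (γ : Perm V) : G ↪g graph D g G :=
  ⟨copy D g γ, copy_adj_copy_iff hK h0 hg⟩

lemma not_adj_of_mem_range_sdiff {δ γ : Perm V} {p q : Vert D g}
    (hp : p ∈ range (copy D g δ) \ range (copy D g γ))
    (hq : q ∈ range (copy D g γ) \ range (copy D g δ)) : ¬ (graph D g G).Adj p q := by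
  simp only [graph, SimpleGraph.iSup_adj, SimpleGraph.map_adj]
  rintro ⟨ε, w, w', h, rfl, rfl⟩
  exact not_adj_of_delta_eq_zero hK (isZeroIsoOn_overlap hK h0 hg ε δ).1
    (isZeroIsoOn_overlap hK h0 hg ε γ).1 hp hq h

lemma delta_image_copy (γ : Perm V) (S : Set V) :
    delta m (graph D g G) (copy D g γ '' S) = delta m G S :=
  delta_image m G _ (copy D g γ).injective.injOn fun _ _ _ _ => copy_adj_copy_iff hK h0 hg

lemma delta_biUnion_range_copy (T : Finset (Perm V)) :
    (∀ X ⊆ ⋃ γ ∈ T, range (copy D g γ), 0 ≤ delta m (graph D g G) X) ∧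
      delta m (graph D g G) (⋃ γ ∈ T, range (copy D g γ)) = 0 := by
  classical
  induction T using Finset.induction_on with
  | empty =>
    simp only [Finset.notMem_empty, iUnion_of_empty, iUnion_empty, subset_empty_iff]
    exact ⟨fun X hX => hX ▸ (delta_empty m _).ge, delta_empty m _⟩
  | insert γ T _ ih =>
    set P := ⋃ δ ∈ T, range (copy D g δ)
    have hU : delta m G (copy D g γ ⁻¹' P) = 0 := by
      rw [preimage_iUnion₂]
      exact delta_biUnion_eq_zero hK fun δ _ => (isZeroIsoOn_overlap hK h0 hg γ δ).1
    have hPQ : ∀ p ∈ P \ range (copy D g γ), ∀ q ∈ range (copy D g γ) \ P,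
        ¬ (graph D g G).Adj p q := by
      rintro p ⟨hp, hpγ⟩ q ⟨hqγ, hq⟩
      obtain ⟨δ, hδ, hpδ⟩ := mem_iUnion₂.1 hp
      exact not_adj_of_mem_range_sdiff hK h0 hg ⟨hpδ, hpγ⟩ ⟨hqγ, fun h => hq (mem_biUnion hδ h)⟩
    rw [Finset.set_biUnion_insert, union_comm]
    refine ⟨fun X hX => delta_nonneg_of_subset_union hPQ ih.1 ?_ hX, ?_⟩
    · intro X hX
      obtain ⟨S, rfl⟩ := subset_range_iff_exists_image_eq.1 hX
      rw [← image_inter_preimage, delta_image_copy hK h0 hg, delta_image_copy hK h0 hg]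
      exact delta_inter_le_of_delta_eq_zero hK hU S
    · have hQ : delta m (graph D g G) (range (copy D g γ)) = 0 := by
        rw [← image_univ, delta_image_copy hK h0 hg, h0]
      have hsplit := delta_union_add_inter_eq m _ hPQ
      rw [← image_preimage_eq_inter_range, delta_image_copy hK h0 hg, hU, hQ, ih.2] at hsplit
      linarith

lemma inK0_graph_and_delta_univ_eq_zero :
    InK0 m (graph D g G) ∧ delta m (graph D g G) univ = 0 := by
  classical
  have := Fintype.ofFinite (Perm V)
  have huniv : ⋃ γ ∈ (Finset.univ : Finset (Perm V)), range (copy D g γ) = univ :=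
    eq_univ_of_forall <| by
      rintro ⟨v, γ⟩
      exact mem_iUnion₂.2 ⟨γ, Finset.mem_univ _, v, rfl⟩
  obtain ⟨hnonneg, hzero⟩ := delta_biUnion_range_copy hK h0 hg Finset.univ
  rw [huniv] at hnonneg hzero
  exact ⟨fun X => hnonneg X (subset_univ X), hzero⟩

end Graph

variable (D g) in
def shiftEquiv (α : Perm V) : Vert D g ≃ Vert D g :=
  Quot.congr ((Equiv.refl V).prodCongr (Equiv.mulLeft α)) fun x y => by
    simp [Glue, mul_assoc]

lemma shiftEquiv_inv_shiftEquiv (α : Perm V) (p : Vert D g) :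
    shiftEquiv D g α⁻¹ (shiftEquiv D g α p) = p := by
  obtain ⟨⟨v, γ⟩⟩ := p
  change copy D g (α⁻¹ * (α * γ)) v = copy D g γ v
  rw [inv_mul_cancel_left]

lemma adj_shiftEquiv {G : SimpleGraph V} (α : Perm V) {p q : Vert D g}
    (h : (graph D g G).Adj p q) : (graph D g G).Adj (shiftEquiv D g α p) (shiftEquiv D g α q) := by
  simp only [graph, SimpleGraph.iSup_adj, SimpleGraph.map_adj] at h ⊢
  obtain ⟨ε, w, w', h, rfl, rfl⟩ := h
  exact ⟨α * ε, w, w', h, rfl, rfl⟩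

variable (D g) in
def shift (G : SimpleGraph V) (α : Perm V) : graph D g G ≃g graph D g G where
  toEquiv := shiftEquiv D g α
  map_rel_iff' := ⟨fun h => by simpa only [shiftEquiv_inv_shiftEquiv] using adj_shiftEquiv α⁻¹ h,
    adj_shiftEquiv α⟩

lemma shift_copy_one (G : SimpleGraph V) {i : ι} {d : V} (hd : d ∈ D i) :
    shift D g G (g i) (copy D g 1 d) = copy D g 1 (g i d) := by
  change copy D g (g i * 1) d = _
  rw [← copy_mul_apply hd, mul_one, one_mul]

end Gluing

theorem extension_property_C_general (m : ℕ) (V : Type) [Fintype V]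
    (G : SimpleGraph V) (hG0 : InK0 m G) (hGzero : delta m G Set.univ = 0)
    (n : ℕ) (D R : Fin (n + 1) → Set V)
    (hD : ∀ i, SelfSuff m G (D i) Set.univ)
    (e : ∀ i, G.induce (D i) ≃g G.induce (R i)) :
    ∃ (W : Type) (_ : Fintype W) (H : SimpleGraph W) (ι : G ↪g H),
      InK0 m H ∧ delta m H Set.univ = 0 ∧
      ∀ i, ∃ f : H ≃g H, ∀ d : ↥(D i), f (ι (d : V)) = ι (((e i) d : ↥(R i)) : V) := by
  classical
  let g i : Equiv.Perm V := (e i).toEquiv.extendSubtype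
  have hg : ∀ i (d : D i), g i d = e i d := fun i d =>
    Equiv.extendSubtype_apply_of_mem _ _ d.2
  have hiso : ∀ i, IsZeroIsoOn m G (g i) (D i) := fun i =>
    ⟨delta_eq_zero_of_selfSuff hG0 hGzero (hD i), fun u hu u' hu' => by
      rw [hg i ⟨u, hu⟩, hg i ⟨u', hu'⟩]
      exact (e i).map_adj_iff⟩
  obtain ⟨hK, hzero⟩ := Gluing.inK0_graph_and_delta_univ_eq_zero hG0 hGzero hiso
  refine ⟨Gluing.Vert D g, Fintype.ofFinite _, Gluing.graph D g G,
    Gluing.copyEmbedding D g hG0 hGzero hiso 1, hK, hzero,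
    fun i => ⟨Gluing.shift D g G (g i), fun d => ?_⟩⟩
  exact (Gluing.shift_copy_one G d.2).trans (congrArg _ (hg i d))

/-- Extension property of the class `C = { A ∈ K₀ : δ(A) = 0 }`: given a finite
graph `G ∈ C` and finitely many isomorphisms `e i` between self-sufficient induced
subgraphs of `G`, there is a finite graph `H ∈ C` containing `G` as an induced
subgraph together with automorphisms `f i` of `H` extending the `e i`. -/
theorem extension_property_C (m : ℕ) (hm : 2 ≤ m) (V : Type) [Fintype V]
    (G : SimpleGraph V) (hG0 : InK0 m G) (hGzero : delta m G Set.univ = 0)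
    (n : ℕ) (D R : Fin (n + 1) → Set V)
    (hD : ∀ i, SelfSuff m G (D i) Set.univ) (hR : ∀ i, SelfSuff m G (R i) Set.univ)
    (e : ∀ i, G.induce (D i) ≃g G.induce (R i)) :
    ∃ (W : Type) (_ : Fintype W) (H : SimpleGraph W) (ι : G ↪g H),
      InK0 m H ∧ delta m H Set.univ = 0 ∧
      ∀ i, ∃ f : H ≃g H, ∀ d : ↥(D i), f (ι (d : V)) = ι (((e i) d : ↥(R i)) : V) :=
  extension_property_C_general m V G hG0 hGzero n D R hD e
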